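/- arXiv:2405.17177 — 6 statements merged into one kernel-verified Lean document; each statement's English description precedes it below -/
import Mathlib

section
/- For all real z₁ > 0 and z₂ > 0, the double Laplace transform ∫₀^∞ ∫₀^∞ b₁ b₂ · max(b₁, b₂) · exp(−b₁ z₁ − b₂ z₂) db₁ db₂ equals 2(z₁⁴ + 3z₁³z₂ + 3z₁²z₂² + 3z₁z₂³ + z₂⁴) / (z₁³ z₂³ (z₁+z₂)³). -/
/-!
For fixed `b ≥ 0` split `x * max b x = b * x + 𝟙_{x > b} * x * (x - b)`; translating the tail
integral by `b` expresses the `b₂`-integral through the Gamma moments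
`∫₀^∞ xⁿ e^{-zx} dx = n! / z^(n+1)` and a factor `e^{-z₂ b}`. The resulting `b₁`-integrand is
again a combination of such moments, with rates `z₁` and `z₁ + z₂`.
-/

open MeasureTheory Real Set

lemma integral_Ioi_pow_mul_exp_neg_mul (n : ℕ) {z : ℝ} (hz : 0 < z) :
    ∫ x in Ioi 0, x ^ n * exp (-(z * x)) = n.factorial / z ^ (n + 1) := by
  have h := integral_rpow_mul_exp_neg_mul_Ioi (a := n + 1) (by positivity) hz
  rw [add_sub_cancel_right, Gamma_nat_eq_factorial] at h
  simp_rw [← rpow_natCast, h]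
  rw [div_rpow zero_le_one hz.le, one_rpow, ← Nat.cast_add_one, rpow_natCast]
  ring

lemma integrableOn_Ioi_pow_mul_exp_neg_mul (n : ℕ) {z : ℝ} (hz : 0 < z) :
    IntegrableOn (fun x ↦ x ^ n * exp (-(z * x))) (Ioi 0) :=
  Integrable.of_integral_ne_zero <| by
    rw [integral_Ioi_pow_mul_exp_neg_mul n hz]; positivity

lemma setIntegral_Ioi_eq_comp_add {E : Type*} [NormedAddCommGroup E] [NormedSpace ℝ E]
    (f : ℝ → E) (b : ℝ) : ∫ x in Ioi b, f x = ∫ u in Ioi 0, f (u + b) := by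
  rw [← integral_indicator measurableSet_Ioi, ← integral_indicator measurableSet_Ioi,
    ← integral_add_right_eq_self _ b]
  congr 1 with u
  simp [indicator_apply]

lemma integral_Ioi_mul_max_mul_exp_neg_mul {z b : ℝ} (hz : 0 < z) (hb : 0 ≤ b) :
    ∫ x in Ioi 0, x * max b x * exp (-(z * x)) =
      b / z ^ 2 + exp (-(z * b)) * (b / z ^ 2 + 2 / z ^ 3) := by
  have h₁ := integrableOn_Ioi_pow_mul_exp_neg_mul 1 hz
  have h₂ := integrableOn_Ioi_pow_mul_exp_neg_mul 2 hz
  have m₁ := integral_Ioi_pow_mul_exp_neg_mul 1 hz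
  have m₂ := integral_Ioi_pow_mul_exp_neg_mul 2 hz
  have hsplit : (fun x ↦ x * max b x * exp (-(z * x))) = fun x ↦
      b * (x ^ 1 * exp (-(z * x))) +
        (Ioi b).indicator (fun x ↦ x * (x - b) * exp (-(z * x))) x := by
    ext x
    rcases le_or_gt x b with hx | hx
    · rw [max_eq_left hx, indicator_of_notMem (show x ∉ Ioi b from not_lt.2 hx)]; ring
    · rw [max_eq_right hx.le, indicator_of_mem (show x ∈ Ioi b from hx)]; ring
  have htail : ∫ x in Ioi b, x * (x - b) * exp (-(z * x)) =
      exp (-(z * b)) * (b / z ^ 2 + 2 / z ^ 3) := by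
    have hmoments : ∫ u in Ioi 0, b * (u ^ 1 * exp (-(z * u))) + u ^ 2 * exp (-(z * u)) =
        b / z ^ 2 + 2 / z ^ 3 := by
      rw [integral_add (h₁.const_mul b) h₂, integral_const_mul, m₁, m₂]
      norm_num [Nat.factorial]; ring
    rw [setIntegral_Ioi_eq_comp_add, ← hmoments, ← integral_const_mul]
    refine setIntegral_congr_fun measurableSet_Ioi fun u _ ↦ ?_
    rw [show -(z * (u + b)) = -(z * b) + -(z * u) by ring, exp_add]
    ring
  rw [hsplit, integral_add (h₁.const_mul b), integral_const_mul, m₁,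
    setIntegral_indicator measurableSet_Ioi, Ioi_inter_Ioi, max_eq_right hb, htail]
  · norm_num
    ring
  · have hint : IntegrableOn (fun x ↦ x * (x - b) * exp (-(z * x))) (Ioi 0) :=
      (h₂.sub (h₁.const_mul b)).congr_fun (fun x _ ↦ by simp only [Pi.sub_apply]; ring)
        measurableSet_Ioi
    exact hint.indicator measurableSet_Ioi

lemma integral_Ioi_mul_mul_max_mul_exp_neg {z₁ z₂ b : ℝ} (hz₂ : 0 < z₂) (hb : 0 ≤ b) :
    ∫ x in Ioi 0, b * x * max b x * exp (-b * z₁ - x * z₂) =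
      1 / z₂ ^ 2 * (b ^ 2 * exp (-(z₁ * b))) + (1 / z₂ ^ 2 * (b ^ 2 * exp (-((z₁ + z₂) * b))) +
        2 / z₂ ^ 3 * (b ^ 1 * exp (-((z₁ + z₂) * b)))) := by
  have hfactor : ∫ x in Ioi 0, b * x * max b x * exp (-b * z₁ - x * z₂) =
      b * exp (-(z₁ * b)) * ∫ x in Ioi 0, x * max b x * exp (-(z₂ * x)) := by
    rw [← integral_const_mul]
    refine setIntegral_congr_fun measurableSet_Ioi fun x _ ↦ ?_
    rw [show -b * z₁ - x * z₂ = -(z₁ * b) + -(z₂ * x) by ring, exp_add]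
    ring
  rw [hfactor, integral_Ioi_mul_max_mul_exp_neg_mul hz₂ hb, add_mul z₁ z₂ b, neg_add, exp_add]
  ring

theorem laplace_max_volume (z₁ z₂ : ℝ) (h₁ : 0 < z₁) (h₂ : 0 < z₂) :
    ∫ b₁ in Set.Ioi (0:ℝ), ∫ b₂ in Set.Ioi (0:ℝ),
      b₁ * b₂ * max b₁ b₂ * Real.exp (-b₁ * z₁ - b₂ * z₂) =
      2 * (z₁^4 + 3*z₁^3*z₂ + 3*z₁^2*z₂^2 + 3*z₁*z₂^3 + z₂^4) /
        (z₁^3 * z₂^3 * (z₁ + z₂)^3) := by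
  have hs : 0 < z₁ + z₂ := add_pos h₁ h₂
  have hI n {z : ℝ} (hz : 0 < z) (c : ℝ) := (integrableOn_Ioi_pow_mul_exp_neg_mul n hz).const_mul c
  rw [setIntegral_congr_fun measurableSet_Ioi
      fun b hb ↦ integral_Ioi_mul_mul_max_mul_exp_neg h₂ (le_of_lt hb),
    integral_add (hI 2 h₁ _) ((hI 2 hs _).fun_add (hI 1 hs _)), integral_add (hI 2 hs _) (hI 1 hs _),
    integral_const_mul, integral_const_mul, integral_const_mul,
    integral_Ioi_pow_mul_exp_neg_mul 2 h₁, integral_Ioi_pow_mul_exp_neg_mul 2 hs,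
    integral_Ioi_pow_mul_exp_neg_mul 1 hs]
  norm_num [Nat.factorial]
  field_simp
  ring
end

section
/- For all real β > 0 and τ ≥ 0, (1/π) ∫₀^{τ²} e^{−2βE} √E dE + (τ/π) ∫_{τ²}^∞ e^{−2βE} dE = Erf(τ√(2β)) / (2(2β)^{3/2} √π). -/
/-! Write `a = 2β`. The tail integral is elementary, `∫_{τ²}^∞ e^{-aE} dE = e^{-aτ²}/a`, and for the
bulk integral both `∫₀^{x²} e^{-aE} √E dE + x e^{-ax²}/a` and `(a√a)⁻¹ ∫₀^{x√a} e^{-t²} dt` vanish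
at `x = 0` and have derivative `e^{-ax²}/a` on `x ≥ 0`, so they agree there. -/

open MeasureTheory

/-- The error function `Erf x = (2/√π) ∫₀^x e^{−t²} dt`. -/
noncomputable def erf (x : ℝ) : ℝ :=
  (2 / Real.sqrt Real.pi) * ∫ t in (0:ℝ)..x, Real.exp (-t^2)

open Real Set

section
variable {a : ℝ}

theorem hasDerivAt_integral_exp_neg_mul_mul_sqrt_sq_add (ha : a ≠ 0) {x : ℝ} (hx : 0 ≤ x) :
    HasDerivAt (fun y ↦ (∫ E in (0:ℝ)..y ^ 2, exp (-a * E) * √E) + y * exp (-a * y ^ 2) / a)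
      (exp (-a * x ^ 2) / a) x := by
  have hf : Continuous fun E ↦ exp (-a * E) * √E := by fun_prop
  have hprim := (hf.integral_hasStrictDerivAt 0 (x ^ 2)).hasDerivAt.comp x (hasDerivAt_pow 2 x)
  have hboundary := ((hasDerivAt_id x).mul ((hasDerivAt_pow 2 x).const_mul (-a)).exp).div_const a
  refine (hprim.add hboundary).congr_deriv ?_
  simp only [sqrt_sq hx, id]
  field_simp
  ring

theorem hasDerivAt_integral_exp_neg_sq_mul_sqrt_div (ha : 0 < a) (x : ℝ) :
    HasDerivAt (fun y ↦ (∫ t in (0:ℝ)..y * √a, exp (-t ^ 2)) / (a * √a))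
      (exp (-a * x ^ 2) / a) x := by
  have hf : Continuous fun t : ℝ ↦ exp (-t ^ 2) := by fun_prop
  have hprim := (hf.integral_hasStrictDerivAt 0 (x * √a)).hasDerivAt.comp x
    ((hasDerivAt_id x).mul_const √a)
  refine (hprim.div_const (a * √a)).congr_deriv ?_
  have hsa : √a ≠ 0 := (sqrt_pos.2 ha).ne'
  rw [mul_pow, sq_sqrt ha.le]
  field_simp

theorem integral_exp_neg_mul_mul_sqrt_sq (ha : 0 < a) {x : ℝ} (hx : 0 ≤ x) :
    ∫ E in (0:ℝ)..x ^ 2, exp (-a * E) * √E =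
      (∫ t in (0:ℝ)..x * √a, exp (-t ^ 2)) / (a * √a) - x * exp (-a * x ^ 2) / a := by
  have hlhs := fun y (hy : y ∈ Icc 0 x) ↦
    hasDerivAt_integral_exp_neg_mul_mul_sqrt_sq_add ha.ne' hy.1
  have hrhs := fun y (_ : y ∈ Icc 0 x) ↦ hasDerivAt_integral_exp_neg_sq_mul_sqrt_div ha y
  have hagree := eq_of_has_deriv_right_eq
    (fun y hy ↦ (hlhs y (Ico_subset_Icc_self hy)).hasDerivWithinAt)
    (fun y hy ↦ (hrhs y (Ico_subset_Icc_self hy)).hasDerivWithinAt)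
    (fun y hy ↦ (hlhs y hy).continuousAt.continuousWithinAt)
    (fun y hy ↦ (hrhs y hy).continuousAt.continuousWithinAt) (by simp) x ⟨hx, le_rfl⟩
  exact eq_sub_of_add_eq hagree

end

theorem rpow_three_halves {a : ℝ} (ha : 0 ≤ a) : a ^ ((3:ℝ) / 2) = a * √a := by
  rw [show (3:ℝ) / 2 = 1 + 1 / 2 by norm_num, rpow_add' ha (by norm_num), rpow_one, ← sqrt_eq_rpow]

theorem airy_GUE_sff (β τ : ℝ) (hβ : 0 < β) (hτ : 0 ≤ τ) :
    (1 / Real.pi) * (∫ E in (0:ℝ)..τ^2, Real.exp (-2*β*E) * Real.sqrt E) +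
      (τ / Real.pi) * (∫ E in Set.Ioi (τ^2), Real.exp (-2*β*E)) =
      erf (τ * Real.sqrt (2*β)) / (2 * (2*β) ^ ((3:ℝ)/2) * Real.sqrt Real.pi) := by
  have h2β : 0 < 2 * β := by positivity
  have hbulk := integral_exp_neg_mul_mul_sqrt_sq h2β hτ
  rw [integral_exp_mul_Ioi (by linarith) (τ ^ 2)]
  simp only [neg_mul] at hbulk ⊢
  rw [hbulk, erf, rpow_three_halves h2β.le]
  have : √(2 * β) ≠ 0 := (sqrt_pos.2 h2β).ne'
  have : √π ≠ 0 := (sqrt_pos.2 pi_pos).ne'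
  field_simp
  rw [sq_sqrt pi_pos.le]
  ring
end

section
/- Let k, n, m be natural numbers with n ≥ 1, m ≥ 1 and k − n − m ≥ 1. Define A(b₁,b₂) = Σ_{i=0}^{m−1} (−1)^{i+m−1} (k−i−n−2)! b₁^{k−i−2} b₂^i / (i! (m−1−i)! (k−n−m−1)! (k−i−2)!) and B(b₁,b₂) = Σ_{i=0}^{k−n−m−1} (−1)^m (k−n−i−2)! (b₁−b₂)^{k−i−2} b₂^i / (i! (k−n−m−1−i)! (m−1)! (k−i−2)!). Then for all real z₁ > 0, z₂ > 0: ∫₀^∞ ∫₀^∞ e^{−b₁z₁ − b₂z₂} [ A(b₁,b₂) + 𝟙_{b₁ > b₂} B(b₁,b₂) ] db₁ db₂ = 1 / (z₁^n z₂^m (z₁+z₂)^{k−n−m}). -/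
/-!
Substituting `n = N + 1`, `m = M + 1`, `k = N + M + P + 3`, the integrand is a linear combination
of the kernels `b₁ ^ d / d! * b₂ ^ e / e!` and `𝟙_{b₁ > b₂} (b₁ - b₂) ^ d / d! * b₂ ^ e / e!`, whose
double Laplace transforms are `1 / (z₁ ^ (d + 1) z₂ ^ (e + 1))` and
`1 / (z₁ ^ (d + 1) (z₁ + z₂) ^ (e + 1))` (for the second, integrate in `b₁` first and translate by
`b₂`). The resulting sum is the partial fraction expansion of
`1 / (z₁ ^ n z₂ ^ m (z₁ + z₂) ^ (k - n - m))` in `z₂`, which after clearing denominators is the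
problem-of-points identity for the negative binomial distribution.
-/

open MeasureTheory
open scoped Nat

section PartialFractions

open Finset

variable {R : Type*} [CommRing R]

/-- Homogenised distribution function of the negative binomial law: for `a + b = 1` it is the
probability that `P + 1` successes (each of probability `a`) occur before `M + 1` failures, so
`negBinomialSum a b M P + negBinomialSum b a P M = 1` is the problem of points. -/
def negBinomialSum (a b : R) (M P : ℕ) : R :=
  ∑ j ∈ range (M + 1), ((P + j).choose j : R) * a ^ (P + 1) * b ^ j * (a + b) ^ (M - j)

lemma negBinomialSum_zero_left (a b : R) (P : ℕ) : negBinomialSum a b 0 P = a ^ (P + 1) := by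
  simp [negBinomialSum]

lemma negBinomialSum_zero_right (a b : R) (M : ℕ) :
    negBinomialSum b a M 0 = (a + b) ^ (M + 1) - a ^ (M + 1) := by
  have geom := geom_sum₂_mul a (a + b) (M + 1)
  simp only [negBinomialSum, zero_add, Nat.choose_self, Nat.cast_one, one_mul, pow_one,
    add_tsub_cancel_right, mul_assoc, ← mul_sum] at geom ⊢
  rw [add_comm b a]
  linear_combination (-1 : R) * geom

lemma negBinomialSum_succ_succ (a b : R) (M P : ℕ) :
    negBinomialSum a b (M + 1) (P + 1) =
      a * negBinomialSum a b (M + 1) P + b * negBinomialSum a b M (P + 1) := by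
  have pascal (j : ℕ) : ((P + 1 + (j + 1)).choose (j + 1) : R) =
      (P + (j + 1)).choose (j + 1) + (P + 1 + j).choose j := by
    rw [show P + 1 + (j + 1) = P + 1 + j + 1 by omega, Nat.choose_succ_succ',
      show P + 1 + j = P + (j + 1) by omega]
    push_cast; ring
  simp only [negBinomialSum, mul_sum, sum_range_succ' _ (M + 1), pascal,
    Nat.add_sub_add_right, add_mul, sum_add_distrib, Nat.choose_zero_right]
  rw [mul_add, mul_sum, add_right_comm]
  congr 1
  · congr 1
    · exact sum_congr rfl fun j _ ↦ by ring
    · ring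
  · exact sum_congr rfl fun j _ ↦ by ring

theorem negBinomialSum_add_negBinomialSum (a b : R) (M P : ℕ) :
    negBinomialSum a b M P + negBinomialSum b a P M = (a + b) ^ (M + P + 1) := by
  induction M generalizing P with
  | zero => rw [negBinomialSum_zero_left, negBinomialSum_zero_right]; ring
  | succ M ihM =>
    induction P with
    | zero => rw [negBinomialSum_zero_left, negBinomialSum_zero_right]; ring
    | succ P ihP =>
      rw [negBinomialSum_succ_succ, negBinomialSum_succ_succ b a]
      linear_combination a * ihP + b * ihM (P + 1)

theorem one_div_pow_mul_pow_mul_add_pow_eq_sum {K : Type*} [Field K] {x y : K} (hx : x ≠ 0)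
    (hy : y ≠ 0) (hxy : x + y ≠ 0) (N M P : ℕ) :
    1 / (x ^ (N + 1) * y ^ (M + 1) * (x + y) ^ (P + 1)) =
      ∑ j ∈ range (M + 1), (-1) ^ j * ((P + j).choose j : K) *
          (1 / (x ^ (N + P + 1 + j + 1) * y ^ (M - j + 1))) +
        ∑ j ∈ range (P + 1), (-1) ^ (M + 1) * ((M + j).choose j : K) *
          (1 / (x ^ (N + M + 1 + j + 1) * (x + y) ^ (P - j + 1))) := by
  have problemOfPoints := negBinomialSum_add_negBinomialSum (x + y) (-y) M P
  rw [add_neg_cancel_right] at problemOfPoints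
  calc 1 / (x ^ (N + 1) * y ^ (M + 1) * (x + y) ^ (P + 1))
      = x ^ (M + P + 1) / (x ^ (N + M + P + 2) * y ^ (M + 1) * (x + y) ^ (P + 1)) := by
        field_simp; ring
    _ = _ := by
      rw [← problemOfPoints, add_div, negBinomialSum, negBinomialSum, sum_div, sum_div,
        show -y + (x + y) = x by ring]
      congr 1 <;> refine sum_congr rfl fun j hj ↦ ?_
      · obtain ⟨i, rfl⟩ := Nat.exists_eq_add_of_le (mem_range_succ_iff.mp hj)
        rw [Nat.add_sub_cancel_left, neg_pow]
        field_simp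
        ring
      · obtain ⟨i, rfl⟩ := Nat.exists_eq_add_of_le (mem_range_succ_iff.mp hj)
        rw [Nat.add_sub_cancel_left, neg_pow]
        field_simp
        ring

end PartialFractions

section Laplace

open Real Set

variable {z z₁ z₂ : ℝ}

lemma integrableOn_exp_neg_mul_mul_pow (hz : 0 < z) (d : ℕ) :
    IntegrableOn (fun t : ℝ ↦ exp (-t * z) * t ^ d) (Ioi 0) := by
  have h := integrableOn_rpow_mul_exp_neg_mul_rpow (p := 1) (s := d)
    (by linarith [(Nat.cast_nonneg d : (0 : ℝ) ≤ d)]) one_pos hz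
  refine h.congr_fun (fun t _ ↦ ?_) measurableSet_Ioi
  simp only [rpow_natCast, rpow_one]
  ring_nf

lemma integral_exp_neg_mul_mul_pow_div_factorial (hz : 0 < z) (d : ℕ) :
    ∫ t in Ioi (0 : ℝ), exp (-t * z) * (t ^ d / d !) = 1 / z ^ (d + 1) := by
  have h := integral_rpow_mul_exp_neg_mul_Ioi (a := d + 1) (by positivity) hz
  rw [add_sub_cancel_right, Gamma_nat_eq_factorial, ← Nat.cast_add_one, rpow_natCast] at h
  calc ∫ t in Ioi (0 : ℝ), exp (-t * z) * (t ^ d / d !)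
      = (∫ t in Ioi (0 : ℝ), t ^ (d : ℝ) * exp (-(z * t))) / d ! := by
        rw [← integral_div]
        refine setIntegral_congr_fun measurableSet_Ioi fun t _ ↦ ?_
        rw [rpow_natCast]
        ring_nf
    _ = 1 / z ^ (d + 1) := by
        rw [h, one_div_pow]
        field_simp

lemma integral_Ioi_ite_sub {E : Type*} [NormedAddCommGroup E] [NormedSpace ℝ E] (g : ℝ → E)
    {c : ℝ} (hc : 0 ≤ c) :
    ∫ t in Ioi (0 : ℝ), (if c < t then g (t - c) else 0) = ∫ t in Ioi (0 : ℝ), g t := by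
  have shift (t : ℝ) : (Ioi 0).indicator (fun t ↦ if c < t then g (t - c) else 0) t =
      (Ioi 0).indicator g (t - c) := by
    by_cases ht : c < t
    · simp [indicator, ht, hc.trans_lt ht]
    · simp [indicator, ht]
  rw [← integral_indicator measurableSet_Ioi, ← integral_indicator measurableSet_Ioi]
  simp only [shift]
  exact integral_sub_right_eq_self _ c

lemma integral_integral_mul_sum_add_sum {α β ι κ : Type*} [MeasurableSpace α]
    [MeasurableSpace β] {μ : Measure α} {ν : Measure β} [SFinite μ] [SFinite ν]
    (w : α → β → ℝ) {A : Finset ι} {B : Finset κ} (a : ι → ℝ) (b : κ → ℝ)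
    {f : ι → α → β → ℝ} {g : κ → α → β → ℝ}
    (hf : ∀ i ∈ A, Integrable (fun q : α × β ↦ w q.1 q.2 * f i q.1 q.2) (μ.prod ν))
    (hg : ∀ j ∈ B, Integrable (fun q : α × β ↦ w q.1 q.2 * g j q.1 q.2) (μ.prod ν)) :
    ∫ x, ∫ y, w x y * (∑ i ∈ A, a i * f i x y + ∑ j ∈ B, b j * g j x y) ∂ν ∂μ =
      ∑ i ∈ A, a i * ∫ x, ∫ y, w x y * f i x y ∂ν ∂μ +
        ∑ j ∈ B, b j * ∫ x, ∫ y, w x y * g j x y ∂ν ∂μ := by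
  have hF := integrable_finsetSum A fun i hi ↦ (hf i hi).const_mul (a i)
  have hG := integrable_finsetSum B fun j hj ↦ (hg j hj).const_mul (b j)
  calc _ = ∫ x, ∫ y, (∑ i ∈ A, a i * (w x y * f i x y) +
          ∑ j ∈ B, b j * (w x y * g j x y)) ∂ν ∂μ := by
        simp only [mul_add, Finset.mul_sum, mul_left_comm]
    _ = ∫ q, (∑ i ∈ A, a i * (w q.1 q.2 * f i q.1 q.2) +
          ∑ j ∈ B, b j * (w q.1 q.2 * g j q.1 q.2)) ∂μ.prod ν :=
        (integral_prod _ (hF.add hG)).symm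
    _ = _ := by
        rw [integral_add hF hG, integral_finsetSum _ fun i hi ↦ (hf i hi).const_mul (a i),
          integral_finsetSum _ fun j hj ↦ (hg j hj).const_mul (b j)]
        congr 1 <;> refine Finset.sum_congr rfl fun i hi ↦ ?_
        · rw [integral_const_mul, integral_prod _ (hf i hi)]
        · rw [integral_const_mul, integral_prod _ (hg i hi)]

lemma exp_neg_mul_sub_mul (x y : ℝ) :
    exp (-x * z₁ - y * z₂) = exp (-x * z₁) * exp (-y * z₂) := by
  rw [← exp_add]; ring_nf

lemma integrable_exp_mul_monomial (hz₁ : 0 < z₁) (hz₂ : 0 < z₂) (d e : ℕ) :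
    Integrable (fun q : ℝ × ℝ ↦ exp (-q.1 * z₁ - q.2 * z₂) * (q.1 ^ d / d ! * (q.2 ^ e / e !)))
      ((volume.restrict (Ioi 0)).prod (volume.restrict (Ioi 0))) := by
  refine (((integrableOn_exp_neg_mul_mul_pow hz₁ d).div_const (d ! : ℝ)).mul_prod
    ((integrableOn_exp_neg_mul_mul_pow hz₂ e).div_const (e ! : ℝ))).congr
    (Filter.Eventually.of_forall fun q ↦ ?_)
  simp only [exp_neg_mul_sub_mul]
  ring

lemma integral_integral_exp_mul_monomial (hz₁ : 0 < z₁) (hz₂ : 0 < z₂) (d e : ℕ) :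
    ∫ b₁ in Ioi (0 : ℝ), ∫ b₂ in Ioi (0 : ℝ),
        exp (-b₁ * z₁ - b₂ * z₂) * (b₁ ^ d / d ! * (b₂ ^ e / e !)) =
      1 / (z₁ ^ (d + 1) * z₂ ^ (e + 1)) := by
  simp only [exp_neg_mul_sub_mul, mul_mul_mul_comm, integral_const_mul, integral_mul_const,
    integral_exp_neg_mul_mul_pow_div_factorial hz₁, integral_exp_neg_mul_mul_pow_div_factorial hz₂,
    one_div_mul_one_div]

lemma integrable_exp_mul_shiftedMonomial (hz₁ : 0 < z₁) (hz₂ : 0 < z₂) (d e : ℕ) :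
    Integrable (fun q : ℝ × ℝ ↦ exp (-q.1 * z₁ - q.2 * z₂) *
        (if q.2 < q.1 then (q.1 - q.2) ^ d / d ! * (q.2 ^ e / e !) else 0))
      ((volume.restrict (Ioi 0)).prod (volume.restrict (Ioi 0))) := by
  refine (integrable_exp_mul_monomial hz₁ hz₂ d e).mono' ?_ ?_
  · refine Measurable.aestronglyMeasurable ?_
    exact (by fun_prop : Measurable fun q : ℝ × ℝ ↦ exp (-q.1 * z₁ - q.2 * z₂)).mul
      (Measurable.ite (measurableSet_lt measurable_snd measurable_fst) (by fun_prop)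
        measurable_const)
  · rw [Measure.prod_restrict, ← Measure.volume_eq_prod]
    filter_upwards [ae_restrict_mem (measurableSet_Ioi.prod measurableSet_Ioi)]
      with q hq
    obtain ⟨hq₁, hq₂⟩ : 0 < q.1 ∧ 0 < q.2 := hq
    rw [norm_mul, norm_of_nonneg (exp_pos _).le]
    gcongr
    split_ifs with h
    · have := sub_pos.2 h
      rw [norm_of_nonneg (by positivity)]
      gcongr
      linarith
    · rw [norm_zero]
      positivity

lemma integral_integral_exp_mul_shiftedMonomial (hz₁ : 0 < z₁) (hz₂ : 0 < z₂) (d e : ℕ) :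
    ∫ b₁ in Ioi (0 : ℝ), ∫ b₂ in Ioi (0 : ℝ), exp (-b₁ * z₁ - b₂ * z₂) *
        (if b₂ < b₁ then (b₁ - b₂) ^ d / d ! * (b₂ ^ e / e !) else 0) =
      1 / (z₁ ^ (d + 1) * (z₁ + z₂) ^ (e + 1)) := by
  have inner (b₂ : ℝ) (hb₂ : b₂ ∈ Ioi 0) :
      ∫ b₁ in Ioi (0 : ℝ), exp (-b₁ * z₁ - b₂ * z₂) *
          (if b₂ < b₁ then (b₁ - b₂) ^ d / d ! * (b₂ ^ e / e !) else 0) =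
        1 / z₁ ^ (d + 1) * (exp (-b₂ * (z₁ + z₂)) * (b₂ ^ e / e !)) := by
    have factor (u : ℝ) : exp (-(u + b₂) * z₁ - b₂ * z₂) * (u ^ d / d ! * (b₂ ^ e / e !)) =
        exp (-u * z₁) * (u ^ d / d !) * (exp (-b₂ * (z₁ + z₂)) * (b₂ ^ e / e !)) := by
      rw [show -(u + b₂) * z₁ - b₂ * z₂ = -u * z₁ + -b₂ * (z₁ + z₂) by ring, exp_add]
      ring
    calc _ = ∫ b₁ in Ioi (0 : ℝ), if b₂ < b₁ then exp (-(b₁ - b₂ + b₂) * z₁ - b₂ * z₂) *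
            ((b₁ - b₂) ^ d / d ! * (b₂ ^ e / e !)) else 0 := by
          simp only [mul_ite, mul_zero, sub_add_cancel]
      _ = ∫ u in Ioi (0 : ℝ), exp (-(u + b₂) * z₁ - b₂ * z₂) * (u ^ d / d ! * (b₂ ^ e / e !)) :=
          integral_Ioi_ite_sub (fun u ↦ exp (-(u + b₂) * z₁ - b₂ * z₂) *
            (u ^ d / d ! * (b₂ ^ e / e !))) (le_of_lt hb₂)
      _ = _ := by
          simp only [factor, integral_mul_const, integral_exp_neg_mul_mul_pow_div_factorial hz₁]
  rw [integral_integral_swap (by exact integrable_exp_mul_shiftedMonomial hz₁ hz₂ d e),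
    setIntegral_congr_fun measurableSet_Ioi inner, integral_const_mul,
    integral_exp_neg_mul_mul_pow_div_factorial (add_pos hz₁ hz₂), one_div_mul_one_div]

end Laplace

lemma kontsevich_polynomialPart_eq (N M P : ℕ) (b₁ b₂ : ℝ) :
    ∑ i ∈ Finset.range (M + 1), (-1 : ℝ) ^ (i + (M + 1) - 1) *
        ((N + M + P + 3 - i - (N + 1) - 2)! : ℝ) * b₁ ^ (N + M + P + 3 - i - 2) * b₂ ^ i /
        ((i ! : ℝ) * ((M + 1 - 1 - i)! : ℝ) * ((N + M + P + 3 - (N + 1) - (M + 1) - 1)! : ℝ) *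
          ((N + M + P + 3 - i - 2)! : ℝ)) =
      ∑ j ∈ Finset.range (M + 1), (-1) ^ j * ((P + j).choose j : ℝ) *
        (b₁ ^ (N + P + 1 + j) / (N + P + 1 + j)! * (b₂ ^ (M - j) / (M - j)!)) := by
  rw [← Finset.sum_range_reflect]
  refine Finset.sum_congr rfl fun j hj ↦ ?_
  obtain ⟨i, rfl⟩ := Nat.exists_eq_add_of_le (Finset.mem_range_succ_iff.mp hj)
  rw [show j + i + 1 - 1 - j = i by omega, show i + (j + i + 1) - 1 = j + 2 * i by omega,
    show N + (j + i) + P + 3 - i - (N + 1) - 2 = P + j by omega,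
    show N + (j + i) + P + 3 - i - 2 = N + P + 1 + j by omega,
    show j + i + 1 - 1 - i = j by omega,
    show N + (j + i) + P + 3 - (N + 1) - (j + i + 1) - 1 = P by omega,
    show j + i - j = i by omega, Nat.cast_choose ℝ (Nat.le_add_left j P), Nat.add_sub_cancel,
    pow_add, pow_mul, neg_one_sq, one_pow, mul_one]
  field_simp

lemma kontsevich_shiftedPart_eq (N M P : ℕ) (b₁ b₂ : ℝ) :
    (if b₂ < b₁ then
      ∑ i ∈ Finset.range (N + M + P + 3 - (N + 1) - (M + 1)), (-1 : ℝ) ^ (M + 1) *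
        ((N + M + P + 3 - (N + 1) - i - 2)! : ℝ) * (b₁ - b₂) ^ (N + M + P + 3 - i - 2) * b₂ ^ i /
        ((i ! : ℝ) * ((N + M + P + 3 - (N + 1) - (M + 1) - 1 - i)! : ℝ) * ((M + 1 - 1)! : ℝ) *
          ((N + M + P + 3 - i - 2)! : ℝ))
    else 0) =
      ∑ j ∈ Finset.range (P + 1), (-1) ^ (M + 1) * ((M + j).choose j : ℝ) *
        (if b₂ < b₁ then (b₁ - b₂) ^ (N + M + 1 + j) / (N + M + 1 + j)! * (b₂ ^ (P - j) / (P - j)!)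
          else 0) := by
  split_ifs
  · rw [show N + M + P + 3 - (N + 1) - (M + 1) = P + 1 by omega, ← Finset.sum_range_reflect]
    refine Finset.sum_congr rfl fun j hj ↦ ?_
    obtain ⟨i, rfl⟩ := Nat.exists_eq_add_of_le (Finset.mem_range_succ_iff.mp hj)
    rw [show j + i + 1 - 1 - j = i by omega,
      show N + M + (j + i) + 3 - (N + 1) - i - 2 = M + j by omega,
      show N + M + (j + i) + 3 - i - 2 = N + M + 1 + j by omega,
      show j + i + 1 - 1 - i = j by omega,
      show M + 1 - 1 = M by omega, show j + i - j = i by omega,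
      Nat.cast_choose ℝ (Nat.le_add_left j M), Nat.add_sub_cancel]
    field_simp
  · simp

theorem inverse_laplace_kontsevich (k n m : ℕ) (hn : 1 ≤ n) (hm : 1 ≤ m)
    (hk : 1 ≤ k - n - m) (z₁ z₂ : ℝ) (h₁ : 0 < z₁) (h₂ : 0 < z₂) :
    ∫ b₁ in Set.Ioi (0:ℝ), ∫ b₂ in Set.Ioi (0:ℝ),
      Real.exp (-b₁*z₁ - b₂*z₂) *
        ((∑ i ∈ Finset.range m,
            (-1:ℝ)^(i+m-1) * ((k-i-n-2).factorial : ℝ) * b₁^(k-i-2) * b₂^i /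
              ((i.factorial : ℝ) * ((m-1-i).factorial : ℝ) *
                ((k-n-m-1).factorial : ℝ) * ((k-i-2).factorial : ℝ))) +
          (if b₂ < b₁ then
            ∑ i ∈ Finset.range (k-n-m),
              (-1:ℝ)^m * ((k-n-i-2).factorial : ℝ) * (b₁-b₂)^(k-i-2) * b₂^i /
                ((i.factorial : ℝ) * ((k-n-m-1-i).factorial : ℝ) *
                  ((m-1).factorial : ℝ) * ((k-i-2).factorial : ℝ))
           else 0)) =
      1 / (z₁^n * z₂^m * (z₁+z₂)^(k-n-m)) := by
  obtain ⟨N, rfl⟩ : ∃ N, n = N + 1 := ⟨n - 1, by omega⟩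
  obtain ⟨M, rfl⟩ : ∃ M, m = M + 1 := ⟨m - 1, by omega⟩
  obtain ⟨P, rfl⟩ : ∃ P, k = N + M + P + 3 := ⟨k - N - M - 3, by omega⟩
  simp only [kontsevich_polynomialPart_eq, kontsevich_shiftedPart_eq]
  rw [integral_integral_mul_sum_add_sum _ _ _
      (fun _ _ ↦ integrable_exp_mul_monomial h₁ h₂ _ _)
      (fun _ _ ↦ integrable_exp_mul_shiftedMonomial h₁ h₂ _ _)]
  simp only [integral_integral_exp_mul_monomial h₁ h₂,
    integral_integral_exp_mul_shiftedMonomial h₁ h₂]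
  rw [show N + M + P + 3 - (N + 1) - (M + 1) = P + 1 by omega]
  exact (one_div_pow_mul_pow_mul_add_pow_eq_sum h₁.ne' h₂.ne' (add_pos h₁ h₂).ne' N M P).symm
end

section
/- Let k, n be natural numbers with n ≥ 1 and k − 2n ≥ 1, and let A and B be defined as: A(b₁,b₂) = Σ_{i=0}^{n−1} (−1)^{i+n−1} (k−i−n−2)! b₁^{k−i−2} b₂^i / (i! (n−1−i)! (k−2n−1)! (k−i−2)!) and B(b₁,b₂) = Σ_{i=0}^{k−2n−1} (−1)^n (k−n−i−2)! (b₁−b₂)^{k−i−2} b₂^i / (i! (k−2n−1−i)! (n−1)! (k−i−2)!). Then for all real b₁ ≥ b₂ ≥ 0, A(b₁,b₂) + B(b₁,b₂) = A(b₂,b₁). -/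
/-!
Write `ν = n - 1`, `μ = k - 2n - 1` and `P_μ(x, y) = A(x, y) + B(x, y) - A(y, x)`; the identity is
polynomial, so it holds for all real `x, y`. The operator `∂ₓ + ∂ᵧ` (multiplication by `z₁ + z₂`
on the Laplace side) maps `A_{μ+1}` to `A_μ` and `B_{μ+1}` to `B_μ`. Hence, by induction on `μ`,
`P_{μ+1}` is constant along each line `x - y = c`, and it vanishes at `y = 0`. For `μ = 0`, `B` is
a multiple of `(x - y)^(2ν+1)`, whose binomial expansion splits into the terms of degree `≤ ν` in
`y`, which give `A(x, y)`, and those of degree `≤ ν` in `x`, which give `A(y, x)`.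
-/

open Finset
open scoped Nat

noncomputable def coeffA (ν μ i : ℕ) : ℝ :=
  (-1) ^ (i + ν) * ((ν + μ - i)! : ℝ) / (i ! * (ν - i)! * μ ! * (2 * ν + μ + 1 - i)!)

noncomputable def coeffB (ν μ i : ℕ) : ℝ :=
  (-1) ^ (ν + 1) * ((ν + μ - i)! : ℝ) / (i ! * (μ - i)! * ν ! * (2 * ν + μ + 1 - i)!)

noncomputable def polyA (ν μ : ℕ) (x y : ℝ) : ℝ :=
  ∑ i ∈ range (ν + 1), coeffA ν μ i * (x ^ (2 * ν + μ + 1 - i) * y ^ i)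

noncomputable def polyB (ν μ : ℕ) (x y : ℝ) : ℝ :=
  ∑ i ∈ range (μ + 1), coeffB ν μ i * ((x - y) ^ (2 * ν + μ + 1 - i) * y ^ i)

theorem coeffA_succ_mul_add {ν μ i : ℕ} (h : i < ν) :
    coeffA ν (μ + 1) i * (2 * ν + μ + 2 - i : ℕ) + coeffA ν (μ + 1) (i + 1) * (i + 1) =
      coeffA ν μ i := by
  obtain ⟨d, rfl⟩ : ∃ d, ν = i + d + 1 := ⟨ν - i - 1, by omega⟩
  simp only [coeffA, show i + d + 1 + (μ + 1) - i = d + μ + 1 + 1 by omega,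
    show i + d + 1 - i = d + 1 by omega, show i + d + 1 + μ - i = d + μ + 1 by omega,
    show 2 * (i + d + 1) + (μ + 1) + 1 - i = i + 2 * d + μ + 3 + 1 by omega,
    show 2 * (i + d + 1) + μ + 2 - i = i + 2 * d + μ + 3 + 1 by omega,
    show i + d + 1 + (μ + 1) - (i + 1) = d + μ + 1 by omega,
    show i + d + 1 - (i + 1) = d by omega,
    show 2 * (i + d + 1) + (μ + 1) + 1 - (i + 1) = i + 2 * d + μ + 3 by omega,
    show 2 * (i + d + 1) + μ + 1 - i = i + 2 * d + μ + 3 by omega,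
    show i + 1 + (i + d + 1) = i + (i + d + 1) + 1 by omega, Nat.factorial_succ, pow_succ]
  push_cast
  field_simp
  ring

theorem coeffA_succ_self (ν μ : ℕ) :
    coeffA ν (μ + 1) ν * (ν + μ + 2) = coeffA ν μ ν := by
  simp only [coeffA, show ν + (μ + 1) - ν = μ + 1 by omega, Nat.sub_self, add_tsub_cancel_left,
    show 2 * ν + (μ + 1) + 1 - ν = ν + μ + 1 + 1 by omega,
    show 2 * ν + μ + 1 - ν = ν + μ + 1 by omega, Nat.factorial_succ]
  push_cast
  field_simp
  ring

theorem coeffB_succ_succ {ν μ i : ℕ} (h : i ≤ μ) :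
    coeffB ν (μ + 1) (i + 1) * (i + 1) = coeffB ν μ i := by
  simp only [coeffB, show ν + (μ + 1) - (i + 1) = ν + μ - i by omega,
    show μ + 1 - (i + 1) = μ - i by omega,
    show 2 * ν + (μ + 1) + 1 - (i + 1) = 2 * ν + μ + 1 - i by omega, Nat.factorial_succ]
  push_cast
  field_simp

theorem coeffA_zero_eq_choose (ν i : ℕ) (h : i ≤ 2 * ν + 1) :
    coeffA ν 0 i = (-1) ^ ν / (2 * ν + 1)! * ((-1) ^ i * (2 * ν + 1).choose i) := by
  rw [coeffA, Nat.cast_choose ℝ h, add_zero, add_zero, pow_add, Nat.factorial_zero, Nat.cast_one]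
  field_simp

theorem coeffB_zero_zero (ν : ℕ) : coeffB ν 0 0 = -((-1) ^ ν / (2 * ν + 1)!) := by
  rw [coeffB, pow_succ]
  field_simp
  simp [Nat.factorial_zero]

theorem sub_pow_two_mul_add_one {R : Type*} [CommRing R] (ν : ℕ) (x y : R) :
    (x - y) ^ (2 * ν + 1) = ∑ i ∈ range (ν + 1), (-1) ^ i * (2 * ν + 1).choose i *
      (x ^ (2 * ν + 1 - i) * y ^ i - y ^ (2 * ν + 1 - i) * x ^ i) := by
  rw [sub_eq_add_neg, add_pow, show 2 * ν + 1 + 1 = (ν + 1) + (ν + 1) by omega, sum_range_add,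
    add_comm]
  nth_rw 1 [← sum_range_reflect]
  simp only [mul_sub, sum_sub_distrib]
  rw [sub_eq_add_neg, ← sum_neg_distrib]
  congr 1 <;> refine sum_congr rfl fun i hi => ?_ <;> rw [mem_range] at hi
  · rw [show ν + 1 + (ν + 1 - 1 - i) = 2 * ν + 1 - i by omega,
      show 2 * ν + 1 - (2 * ν + 1 - i) = i by omega, Nat.choose_symm (by omega), neg_pow]
    ring
  · rw [neg_pow, show 2 * ν + 1 - i = 2 * (ν - i) + 1 + i by omega, pow_add, pow_succ, pow_mul]
    simp only [neg_one_sq, one_pow]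
    ring

theorem polyA_zero_add_polyB_zero (ν : ℕ) (x y : ℝ) :
    polyA ν 0 x y + polyB ν 0 x y = polyA ν 0 y x := by
  have hA : ∀ x y : ℝ, polyA ν 0 x y = (-1) ^ ν / (2 * ν + 1)! *
      ∑ i ∈ range (ν + 1), (-1) ^ i * (2 * ν + 1).choose i * (x ^ (2 * ν + 1 - i) * y ^ i) := by
    intro x y
    rw [polyA, mul_sum]
    refine sum_congr rfl fun i hi => ?_
    rw [coeffA_zero_eq_choose ν i (by rw [mem_range] at hi; omega)]
    ring
  have hB : polyB ν 0 x y = -((-1) ^ ν / (2 * ν + 1)!) * (x - y) ^ (2 * ν + 1) := by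
    simp [polyB, coeffB_zero_zero]
  rw [hA, hA, hB, sub_pow_two_mul_add_one]
  simp only [mul_sub, sum_sub_distrib]
  ring

theorem hasDerivAt_add_pow_mul_add_pow (a b : ℕ) (c d t : ℝ) :
    HasDerivAt (fun s => (c + s) ^ a * (d + s) ^ b)
      (a * (c + t) ^ (a - 1) * (d + t) ^ b + (c + t) ^ a * (b * (d + t) ^ (b - 1))) t := by
  simpa using (((hasDerivAt_id t).const_add c).fun_pow a).fun_mul
    (((hasDerivAt_id t).const_add d).fun_pow b)

theorem hasDerivAt_polyA_succ (ν μ : ℕ) (c d t : ℝ) :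
    HasDerivAt (fun s => polyA ν (μ + 1) (c + s) (d + s)) (polyA ν μ (c + t) (d + t)) t := by
  set x := c + t
  set y := d + t
  refine (HasDerivAt.fun_sum fun i _ =>
    (hasDerivAt_add_pow_mul_add_pow (2 * ν + (μ + 1) + 1 - i) i c d t).const_mul
      (coeffA ν (μ + 1) i)).congr_deriv ?_
  have hsplit : ∀ i ∈ range (ν + 1),
      coeffA ν (μ + 1) i * (((2 * ν + (μ + 1) + 1 - i : ℕ) : ℝ) *
        x ^ (2 * ν + (μ + 1) + 1 - i - 1) * y ^ i +
          x ^ (2 * ν + (μ + 1) + 1 - i) * (i * y ^ (i - 1)))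
      = coeffA ν (μ + 1) i * (2 * ν + μ + 2 - i : ℕ) * (x ^ (2 * ν + μ + 1 - i) * y ^ i)
        + coeffA ν (μ + 1) i * i * (x ^ (2 * ν + μ + 2 - i) * y ^ (i - 1)) := by
    intro i hi
    rw [mem_range] at hi
    rw [show 2 * ν + (μ + 1) + 1 - i - 1 = 2 * ν + μ + 1 - i by omega,
      show 2 * ν + (μ + 1) + 1 - i = 2 * ν + μ + 2 - i by omega]
    ring
  have hshift :
      ∑ i ∈ range (ν + 1), coeffA ν (μ + 1) i * i * (x ^ (2 * ν + μ + 2 - i) * y ^ (i - 1)) =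
        ∑ i ∈ range ν, coeffA ν (μ + 1) (i + 1) * (i + 1) * (x ^ (2 * ν + μ + 1 - i) * y ^ i) := by
    rw [sum_range_succ']
    simp only [Nat.cast_zero, mul_zero, zero_mul, add_zero, Nat.cast_add, Nat.cast_one,
      add_tsub_cancel_right, show ∀ i, 2 * ν + μ + 2 - (i + 1) = 2 * ν + μ + 1 - i from
        fun i => by omega]
  rw [sum_congr rfl hsplit, sum_add_distrib, hshift, sum_range_succ, polyA, sum_range_succ,
    add_right_comm, ← sum_add_distrib]
  congr 1
  · refine sum_congr rfl fun i hi => ?_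
    linear_combination
      (x ^ (2 * ν + μ + 1 - i) * y ^ i) * coeffA_succ_mul_add (μ := μ) (mem_range.mp hi)
  · rw [show 2 * ν + μ + 2 - ν = ν + μ + 2 by omega]
    push_cast
    linear_combination (x ^ (2 * ν + μ + 1 - ν) * y ^ ν) * coeffA_succ_self ν μ

theorem hasDerivAt_polyB_succ (ν μ : ℕ) (c d t : ℝ) :
    HasDerivAt (fun s => polyB ν (μ + 1) (c + s) (d + s)) (polyB ν μ (c + t) (d + t)) t := by
  simp only [polyB, add_sub_add_right_eq_sub]
  refine (HasDerivAt.fun_sum fun i _ =>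
    ((((hasDerivAt_id t).const_add d).fun_pow i).const_mul
      ((c - d) ^ (2 * ν + (μ + 1) + 1 - i))).const_mul (coeffB ν (μ + 1) i)).congr_deriv ?_
  rw [sum_range_succ']
  simp only [Nat.cast_zero, zero_mul, mul_zero, add_zero, id_eq, mul_one, Nat.cast_add,
    Nat.cast_one, add_tsub_cancel_right]
  refine sum_congr rfl fun i hi => ?_
  rw [show 2 * ν + (μ + 1) + 1 - (i + 1) = 2 * ν + μ + 1 - i by omega,
    ← coeffB_succ_succ (Nat.lt_succ_iff.mp (mem_range.mp hi))]
  ring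

theorem polyA_add_polyB_zero_right (ν μ : ℕ) (c : ℝ) :
    polyA ν μ c 0 + polyB ν μ c 0 = polyA ν μ 0 c := by
  have hA : polyA ν μ c 0 = coeffA ν μ 0 * c ^ (2 * ν + μ + 1) := by
    simp [polyA, sum_range_succ']
  have hB : polyB ν μ c 0 = coeffB ν μ 0 * c ^ (2 * ν + μ + 1) := by
    simp [polyB, sum_range_succ']
  have hA' : polyA ν μ 0 c = 0 :=
    sum_eq_zero fun i hi => by
      rw [zero_pow (by rw [mem_range] at hi; omega), zero_mul, mul_zero]
  rw [hA, hB, hA', coeffA, coeffB]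
  simp only [Nat.sub_zero, zero_add, pow_succ]
  ring

theorem polyA_add_polyB_eq_polyA_swap (ν μ : ℕ) (x y : ℝ) :
    polyA ν μ x y + polyB ν μ x y = polyA ν μ y x := by
  induction μ generalizing x y with
  | zero => exact polyA_zero_add_polyB_zero ν x y
  | succ μ ih =>
    set c := x - y
    let f : ℝ → ℝ := fun s =>
      polyA ν (μ + 1) (c + s) s + polyB ν (μ + 1) (c + s) s - polyA ν (μ + 1) s (c + s)
    have hf : ∀ t, HasDerivAt f 0 t := fun t => by
      have h := ((hasDerivAt_polyA_succ ν μ c 0 t).add (hasDerivAt_polyB_succ ν μ c 0 t)).sub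
        (hasDerivAt_polyA_succ ν μ 0 c t)
      simp only [zero_add] at h
      rwa [ih, sub_self] at h
    have hconst := is_const_of_deriv_eq_zero (fun t => (hf t).differentiableAt)
      (fun t => (hf t).deriv) y 0
    have hf0 : f 0 = 0 := by
      simp only [f, add_zero, polyA_add_polyB_zero_right, sub_self]
    simpa only [f, hf0, show c + y = x by ring, sub_eq_zero] using hconst

theorem diagonal_symmetry_general (k n : ℕ) (hn : 1 ≤ n) (hk : 1 ≤ k - 2*n)
    (b₁ b₂ : ℝ) :
    (∑ i ∈ Finset.range n,
        (-1:ℝ)^(i+n-1) * ((k-i-n-2).factorial : ℝ) * b₁^(k-i-2) * b₂^i /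
          ((i.factorial : ℝ) * ((n-1-i).factorial : ℝ) *
            ((k-2*n-1).factorial : ℝ) * ((k-i-2).factorial : ℝ))) +
      (∑ i ∈ Finset.range (k-2*n),
        (-1:ℝ)^n * ((k-n-i-2).factorial : ℝ) * (b₁-b₂)^(k-i-2) * b₂^i /
          ((i.factorial : ℝ) * ((k-2*n-1-i).factorial : ℝ) *
            ((n-1).factorial : ℝ) * ((k-i-2).factorial : ℝ))) =
      ∑ i ∈ Finset.range n,
        (-1:ℝ)^(i+n-1) * ((k-i-n-2).factorial : ℝ) * b₂^(k-i-2) * b₁^i /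
          ((i.factorial : ℝ) * ((n-1-i).factorial : ℝ) *
            ((k-2*n-1).factorial : ℝ) * ((k-i-2).factorial : ℝ)) := by
  obtain ⟨ν, rfl⟩ : ∃ ν, n = ν + 1 := ⟨n - 1, by omega⟩
  obtain ⟨μ, rfl⟩ : ∃ μ, k = 2 * ν + μ + 3 := ⟨k - 2 * ν - 3, by omega⟩
  have e₁ : ∀ i, i + (ν + 1) - 1 = i + ν := fun i => by omega
  have e₂ : ∀ i, 2 * ν + μ + 3 - i - (ν + 1) - 2 = ν + μ - i := fun i => by omega
  have e₃ : ∀ i, 2 * ν + μ + 3 - (ν + 1) - i - 2 = ν + μ - i := fun i => by omega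
  have e₄ : ∀ i, 2 * ν + μ + 3 - i - 2 = 2 * ν + μ + 1 - i := fun i => by omega
  have e₅ : 2 * ν + μ + 3 - 2 * (ν + 1) = μ + 1 := by omega
  simp only [e₁, e₂, e₃, e₄, e₅, add_tsub_cancel_right]
  convert polyA_add_polyB_eq_polyA_swap ν μ b₁ b₂ using 2 <;>
    exact sum_congr rfl fun i _ => by simp only [coeffA, coeffB]; ring

theorem diagonal_symmetry (k n : ℕ) (hn : 1 ≤ n) (hk : 1 ≤ k - 2*n)
    (b₁ b₂ : ℝ) (hb₂ : 0 ≤ b₂) (hb : b₂ ≤ b₁) :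
    (∑ i ∈ Finset.range n,
        (-1:ℝ)^(i+n-1) * ((k-i-n-2).factorial : ℝ) * b₁^(k-i-2) * b₂^i /
          ((i.factorial : ℝ) * ((n-1-i).factorial : ℝ) *
            ((k-2*n-1).factorial : ℝ) * ((k-i-2).factorial : ℝ))) +
      (∑ i ∈ Finset.range (k-2*n),
        (-1:ℝ)^n * ((k-n-i-2).factorial : ℝ) * (b₁-b₂)^(k-i-2) * b₂^i /
          ((i.factorial : ℝ) * ((k-2*n-1-i).factorial : ℝ) *
            ((n-1).factorial : ℝ) * ((k-i-2).factorial : ℝ))) =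
      ∑ i ∈ Finset.range n,
        (-1:ℝ)^(i+n-1) * ((k-i-n-2).factorial : ℝ) * b₂^(k-i-2) * b₁^i /
          ((i.factorial : ℝ) * ((n-1-i).factorial : ℝ) *
            ((k-2*n-1).factorial : ℝ) * ((k-i-2).factorial : ℝ)) :=
  diagonal_symmetry_general k n hn hk b₁ b₂
end

section
/- Let C₁,₉ = 10240, C₃,₇ = 46080, C₅,₅ = 64512, C₇,₃ = 30720, C₉,₁ = 0 (the coefficients, up to the common factor 1/232243200, of b₁^α b₂^γ with α, γ odd in the genus-2 unorientable Airy Weil–Petersson volume V₂^>(b₁,b₂)). Then Σ_{α+γ=10, α,γ odd} C_{α,γ} · Γ(1+α/2) · Γ(1+γ/2) · (−1)^{(γ+1)/2} = 0. -/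
theorem genus_two_cancellation :
    (10240:ℝ) * Real.Gamma (1 + 1/2) * Real.Gamma (1 + 9/2) * (-1:ℝ)^((9+1)/2 : ℕ) +
      (46080:ℝ) * Real.Gamma (1 + 3/2) * Real.Gamma (1 + 7/2) * (-1:ℝ)^((7+1)/2 : ℕ) +
      (64512:ℝ) * Real.Gamma (1 + 5/2) * Real.Gamma (1 + 5/2) * (-1:ℝ)^((5+1)/2 : ℕ) +
      (30720:ℝ) * Real.Gamma (1 + 7/2) * Real.Gamma (1 + 3/2) * (-1:ℝ)^((3+1)/2 : ℕ) +
      (0:ℝ) * Real.Gamma (1 + 9/2) * Real.Gamma (1 + 1/2) * (-1:ℝ)^((1+1)/2 : ℕ) = 0 := by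
  have h0 : Real.Gamma (1/2) = Real.sqrt Real.pi := Real.Gamma_one_half_eq
  have step : ∀ x : ℝ, x ≠ 0 → Real.Gamma (x + 1) = x * Real.Gamma x := by
    intro x hx; rw [Real.Gamma_add_one hx]
  have h1 : Real.Gamma (3/2) = (1/2) * Real.sqrt Real.pi := by
    have := step (1/2) (by norm_num); norm_num at this; rw [show (3:ℝ)/2 = 1/2 + 1 by norm_num, step (1/2) (by norm_num), h0]
  have h2 : Real.Gamma (5/2) = (3/4) * Real.sqrt Real.pi := by
    rw [show (5:ℝ)/2 = 3/2 + 1 by norm_num, step (3/2) (by norm_num), h1]; ring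
  have h3 : Real.Gamma (7/2) = (15/8) * Real.sqrt Real.pi := by
    rw [show (7:ℝ)/2 = 5/2 + 1 by norm_num, step (5/2) (by norm_num), h2]; ring
  have h4 : Real.Gamma (9/2) = (105/16) * Real.sqrt Real.pi := by
    rw [show (9:ℝ)/2 = 7/2 + 1 by norm_num, step (7/2) (by norm_num), h3]; ring
  have h5 : Real.Gamma (11/2) = (945/32) * Real.sqrt Real.pi := by
    rw [show (11:ℝ)/2 = 9/2 + 1 by norm_num, step (9/2) (by norm_num), h4]; ring
  rw [show (1:ℝ) + 1/2 = 3/2 by norm_num, show (1:ℝ) + 9/2 = 11/2 by norm_num,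
    show (1:ℝ) + 3/2 = 5/2 by norm_num, show (1:ℝ) + 7/2 = 9/2 by norm_num,
    show (1:ℝ) + 5/2 = 7/2 by norm_num, h1, h2, h3, h4, h5]
  norm_num
  ring
end

section
/- For all real x₁ < 0 and x₂ < 0 with x₁ ≠ x₂, the limit as a → +∞ of (1/(x₁−x₂)²) · [ (x₁x₂ − (a/2)(x₁+x₂)) / (√(x₁² − x₁a) · √(x₂² − x₂a)) − 1 ] equals 1 / (2 (√(−x₁) + √(−x₂))² √(−x₁) √(−x₂)). -/
/-!
Dividing numerator and denominator by `a` turns the expression into a function of `t = 1/a`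
that is continuous at `t = 0`, with value `-(x₁ + x₂) / (2 √(-x₁) √(-x₂))` there. Writing
`xᵢ = -sᵢ²`, this value minus one is `(s₁ - s₂)² / (2 s₁ s₂)`, while
`(x₁ - x₂)² = (s₁ + s₂)² (s₁ - s₂)²`, so the factor `(s₁ - s₂)²` cancels.
-/

open Filter Topology

lemma Real.sqrt_sq_sub_mul_eq {x a : ℝ} (ha : 0 < a) :
    √(x ^ 2 - x * a) = √a * √(x ^ 2 * a⁻¹ - x) := by
  rw [← Real.sqrt_mul ha.le]
  congr 1
  field_simp

lemma resolvent_ratio_eq_inv (x₁ x₂ : ℝ) {a : ℝ} (ha : 0 < a) :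
    (x₁ * x₂ - (a / 2) * (x₁ + x₂)) / (√(x₁ ^ 2 - x₁ * a) * √(x₂ ^ 2 - x₂ * a)) =
      (x₁ * x₂ * a⁻¹ - (x₁ + x₂) / 2) / (√(x₁ ^ 2 * a⁻¹ - x₁) * √(x₂ ^ 2 * a⁻¹ - x₂)) := by
  have hnum : x₁ * x₂ - (a / 2) * (x₁ + x₂) = a * (x₁ * x₂ * a⁻¹ - (x₁ + x₂) / 2) := by
    field_simp
  rw [Real.sqrt_sq_sub_mul_eq ha, Real.sqrt_sq_sub_mul_eq ha, hnum,
    mul_mul_mul_comm, Real.mul_self_sqrt ha.le, mul_div_mul_left _ _ ha.ne']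

lemma tendsto_resolvent_ratio {x₁ x₂ : ℝ} (h₁ : x₁ < 0) (h₂ : x₂ < 0) :
    Tendsto (fun a : ℝ =>
        (x₁ * x₂ - (a / 2) * (x₁ + x₂)) / (√(x₁ ^ 2 - x₁ * a) * √(x₂ ^ 2 - x₂ * a)))
      atTop (𝓝 (-((x₁ + x₂) / 2) / (√(-x₁) * √(-x₂)))) := by
  set f : ℝ → ℝ := fun t =>
    (x₁ * x₂ * t - (x₁ + x₂) / 2) / (√(x₁ ^ 2 * t - x₁) * √(x₂ ^ 2 * t - x₂))
  have hf : ContinuousAt f 0 := by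
    refine ContinuousAt.div (by fun_prop) (by fun_prop) ?_
    simp only [mul_zero, zero_sub]
    have := Real.sqrt_pos.2 (neg_pos.2 h₁)
    have := Real.sqrt_pos.2 (neg_pos.2 h₂)
    positivity
  have hlim := hf.tendsto.comp tendsto_inv_atTop_zero
  simp only [f, Function.comp_def, mul_zero, zero_sub] at hlim
  refine hlim.congr' ?_
  filter_upwards [eventually_gt_atTop 0] with a ha
  exact (resolvent_ratio_eq_inv x₁ x₂ ha).symm

lemma airy_resolvent_value_eq {s₁ s₂ : ℝ} (h₁ : 0 < s₁) (h₂ : 0 < s₂) (hne : s₁ ≠ s₂) :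
    1 / (-s₁ ^ 2 - -s₂ ^ 2) ^ 2 * (-((-s₁ ^ 2 + -s₂ ^ 2) / 2) / (s₁ * s₂) - 1) =
      1 / (2 * (s₁ + s₂) ^ 2 * s₁ * s₂) := by
  have hsub : s₁ - s₂ ≠ 0 := sub_ne_zero.2 hne
  have hsq : (-s₁ ^ 2 - -s₂ ^ 2) ^ 2 = (s₁ + s₂) ^ 2 * (s₁ - s₂) ^ 2 := by ring
  rw [hsq]
  field_simp
  ring

theorem airy_limit_resolvent (x₁ x₂ : ℝ) (h₁ : x₁ < 0) (h₂ : x₂ < 0) (hne : x₁ ≠ x₂) :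
    Tendsto (fun a : ℝ =>
        (1/(x₁ - x₂)^2) *
          ((x₁*x₂ - (a/2)*(x₁ + x₂)) /
              (Real.sqrt (x₁^2 - x₁*a) * Real.sqrt (x₂^2 - x₂*a)) - 1))
      atTop
      (𝓝 (1 / (2 * (Real.sqrt (-x₁) + Real.sqrt (-x₂))^2 *
        Real.sqrt (-x₁) * Real.sqrt (-x₂)))) := by
  have hx₁ : x₁ = -√(-x₁) ^ 2 := by rw [Real.sq_sqrt (neg_nonneg.2 h₁.le), neg_neg]
  have hx₂ : x₂ = -√(-x₂) ^ 2 := by rw [Real.sq_sqrt (neg_nonneg.2 h₂.le), neg_neg]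
  have hsne : √(-x₁) ≠ √(-x₂) := fun h ↦ hne (by rw [hx₁, hx₂, h])
  have hval := airy_resolvent_value_eq (Real.sqrt_pos.2 (neg_pos.2 h₁)) (Real.sqrt_pos.2 (neg_pos.2 h₂)) hsne
  rw [← hx₁, ← hx₂] at hval
  rw [← hval]
  exact ((tendsto_resolvent_ratio h₁ h₂).sub_const 1).const_mul _
end
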